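/- If a change-factor node θ has no edge to the reward node r_{t+1} and no directed path through states to any future reward r_{t+τ}, then θ is independent of the action a_t conditional on the cumulative reward R_{t+1}, under the Markov condition. -/

import Mathlib

/-- Nodes of the unrolled DBN augmented with a change-factor node `θ` and the
cumulative future reward nodes `R_t`. -/
inductive RLNode (ι : Type*) where
  | state (i : ι) (t : ℕ)
  | action (t : ℕ)
  | reward (t : ℕ)
  | cum (t : ℕ)
  | theta

/-- Edges: the structural masks as before; the change factor `θ` is a constant
per-domain parameter node whose only possible edges go into state components
(`ThetaS i`: `θ → s_{i,t}` for all `t`) or into the reward (`ThetaR`: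
`θ → r_t` for all `t`); `a_t` has edges only into `s_{·,t+1}` and `r_{t+1}`;
`R_v` is a collider child of all rewards `r_u`, `u ≥ v`. -/
def RLEdge {ι : Type*} (Sedge : ι → ι → Prop) (Aedge Redge : ι → Prop)
    (ThetaS : ι → Prop) (ThetaR : Prop) :
    RLNode ι → RLNode ι → Prop
  | RLNode.state i t, RLNode.state j t' => t' = t + 1 ∧ Sedge i j
  | RLNode.state i t, RLNode.reward t' => t' = t + 1 ∧ Redge i
  | RLNode.action t, RLNode.state j t' => t' = t + 1 ∧ Aedge j
  | RLNode.action t, RLNode.reward t' => t' = t + 1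
  | RLNode.reward u, RLNode.cum v => v ≤ u
  | RLNode.theta, RLNode.state i _ => ThetaS i
  | RLNode.theta, RLNode.reward _ => ThetaR
  | _, _ => False

def Adjacent {V : Type*} (E : V → V → Prop) (a b : V) : Prop := E a b ∨ E b a

def IsWalkBetween {V : Type*} (E : V → V → Prop) (p : List V) (x y : V) : Prop :=
  List.Chain' (Adjacent E) p ∧ p.head? = some x ∧ p.getLast? = some y

def Descendant {V : Type*} (E : V → V → Prop) (a b : V) : Prop :=
  Relation.ReflTransGen E a b

def Blocked {V : Type*} (E : V → V → Prop) (Z : Set V) (p : List V) : Prop :=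
  ∃ (l₁ l₂ : List V) (i m j : V), p = l₁ ++ i :: m :: j :: l₂ ∧
    ((¬(E i m ∧ E j m) ∧ m ∈ Z) ∨
      (E i m ∧ E j m ∧ ∀ w, Descendant E m w → w ∉ Z))

def DSep {V : Type*} (E : V → V → Prop) (x y : V) (Z : Set V) : Prop :=
  ∀ p, IsWalkBetween E p x y → Blocked E Z p

/-!
The descendants of `θ` are `θ` itself and state nodes only, since a descendant reward would
be a directed path `θ ⇝ r_u`; in particular neither `a_t` nor `R_{t+1}` is one. As `θ` has no
parents, a walk from `θ` leaves along an edge out of `θ` and moves forward through descendants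
of `θ`; since it ends at `a_t`, it must at some point turn back, which makes the last forward
node a collider. The descendants of that collider are descendants of `θ`, so none of them is
`R_{t+1}`, and the walk is blocked.
-/

section DSep

variable {V : Type*} {E : V → V → Prop} {Z : Set V}

theorem Blocked.cons {p : List V} (h : Blocked E Z p) (a : V) : Blocked E Z (a :: p) := by
  obtain ⟨l₁, l₂, i, m, j, rfl, hb⟩ := h
  exact ⟨a :: l₁, l₂, i, m, j, rfl, hb⟩

theorem blocked_of_edge_into_descendant {x y : V} (hy : ¬ Descendant E x y)
    (hZ : ∀ w, Descendant E x w → w ∉ Z) :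
    ∀ (q : List V) (a b : V), Descendant E x b → E a b →
      List.IsChain (Adjacent E) (a :: b :: q) → (a :: b :: q).getLast? = some y →
      Blocked E Z (a :: b :: q) := by
  intro q
  induction q with
  | nil =>
    intro a b hb _ _ hlast
    obtain rfl : b = y := by simpa using hlast
    exact absurd hb hy
  | cons c q ih =>
    intro a b hb hab hchain hlast
    have hchain' := (List.isChain_cons_cons.mp hchain).2
    rcases (List.isChain_cons_cons.mp hchain').1 with hbc | hcb
    · exact (ih b c (hb.tail hbc) hbc hchain' (by simpa using hlast)).cons a
    · exact ⟨[], q, a, b, c, rfl, Or.inr ⟨hab, hcb, fun w hw => hZ w (hb.trans hw)⟩⟩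

theorem dSep_of_no_parents {x y : V} (hx : ∀ a, ¬ E a x) (hy : ¬ Descendant E x y)
    (hZ : ∀ w, Descendant E x w → w ∉ Z) : DSep E x y Z := by
  rintro p ⟨hchain, hhead, hlast⟩
  rcases p with _ | ⟨a, _ | ⟨b, q⟩⟩
  · simp at hhead
  · obtain rfl : a = x := by simpa using hhead
    obtain rfl : a = y := by simpa using hlast
    exact absurd Relation.ReflTransGen.refl hy
  · obtain rfl : a = x := by simpa using hhead
    rcases (List.isChain_cons_cons.mp hchain).1 with hab | hba
    · exact blocked_of_edge_into_descendant hy hZ q a b (.single hab) hab hchain hlast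
    · exact absurd hba (hx b)

end DSep

section RLGraph

variable {ι : Type*} {Sedge : ι → ι → Prop} {Aedge Redge ThetaS : ι → Prop} {ThetaR : Prop}

theorem RLEdge.not_edge_theta (a : RLNode ι) :
    ¬ RLEdge Sedge Aedge Redge ThetaS ThetaR a RLNode.theta := by
  cases a <;> exact id

theorem descendant_theta_eq_theta_or_state
    (no_path_to_reward : ∀ u : ℕ,
      ¬ Relation.TransGen (RLEdge Sedge Aedge Redge ThetaS ThetaR)
          RLNode.theta (RLNode.reward u))
    {w : RLNode ι} (hw : Descendant (RLEdge Sedge Aedge Redge ThetaS ThetaR) RLNode.theta w) :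
    w = RLNode.theta ∨ ∃ i s, w = RLNode.state i s := by
  induction hw with
  | refl => exact .inl rfl
  | @tail b c hb hbc ih =>
    cases c with
    | state i s => exact .inr ⟨i, s, rfl⟩
    | reward u => exact absurd (.tail' hb hbc) (no_path_to_reward u)
    | action | cum | theta => rcases ih with rfl | ⟨i, s, rfl⟩ <;> exact hbc.elim

end RLGraph

theorem theta_indep_action_given_cumulative_reward_general
    {ι : Type*} (Sedge : ι → ι → Prop) (Aedge Redge : ι → Prop)
    (ThetaS : ι → Prop) (ThetaR : Prop)
    (CI : RLNode ι → RLNode ι → Set (RLNode ι) → Prop)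
    (markov : ∀ x y Z,
      DSep (RLEdge Sedge Aedge Redge ThetaS ThetaR) x y Z → CI x y Z)
    (no_path_to_reward : ∀ u : ℕ,
      ¬ Relation.TransGen (RLEdge Sedge Aedge Redge ThetaS ThetaR)
          RLNode.theta (RLNode.reward u))
    (t : ℕ) :
    CI RLNode.theta (RLNode.action t) {RLNode.cum (t + 1)} := by
  refine markov _ _ _ (dSep_of_no_parents RLEdge.not_edge_theta (fun h => ?_) ?_)
  · rcases descendant_theta_eq_theta_or_state no_path_to_reward h with h | ⟨_, _, h⟩ <;> cases h
  · rintro w hw rfl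
    rcases descendant_theta_eq_theta_or_state no_path_to_reward hw with h | ⟨_, _, h⟩ <;> cases h

/-- If the change-factor node `θ` has no edge to the reward
node and no directed path through states to any future reward, then `θ` is
independent of the action `a_t` conditional on the cumulative reward
`R_{t+1}`, under the Markov condition (d-separation implies conditional
independence). -/
theorem theta_indep_action_given_cumulative_reward
    {ι : Type*} (Sedge : ι → ι → Prop) (Aedge Redge : ι → Prop)
    (ThetaS : ι → Prop) (ThetaR : Prop)
    (CI : RLNode ι → RLNode ι → Set (RLNode ι) → Prop)
    (markov : ∀ x y Z,
      DSep (RLEdge Sedge Aedge Redge ThetaS ThetaR) x y Z → CI x y Z)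
    (no_edge_to_reward : ¬ ThetaR)
    (no_path_to_reward : ∀ u : ℕ,
      ¬ Relation.TransGen (RLEdge Sedge Aedge Redge ThetaS ThetaR)
          RLNode.theta (RLNode.reward u))
    (t : ℕ) :
    CI RLNode.theta (RLNode.action t) {RLNode.cum (t + 1)} :=
  theta_indep_action_given_cumulative_reward_general Sedge Aedge Redge ThetaS ThetaR CI markov
    no_path_to_reward t
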